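/- arXiv:1801.06864 — 2 statements merged into one kernel-verified Lean document; each statement's English description precedes it below -/
import Mathlib

section
/- Suppose J ∈ ℝ^{m×n}, λ > 0, ρ > 0, and A ∈ ℝ^{r×n} has full row rank (rank A = r). Then P = ρ A (JᵀJ + λI + ρ AᵀA)⁻¹ Aᵀ is symmetric positive definite with all eigenvalues in (0,1), and consequently ‖I − 2P‖ < 1 in spectral norm. -/
open Matrix
open scoped Matrix.Norms.L2Operator ComplexOrder

/-! Write `N = JᵀJ + λI`, which is positive definite, and `M = N + ρAᵀA`. Positivity of `P`
is that of `M⁻¹` pushed through the injective map `Aᵀ`. For `I - P`, put `u = M⁻¹Aᵀv`; then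
`M u = Aᵀv` and `M = N + ρAᵀA` give, after completing the square,
`vᵀ(I - P)v = ‖v - ρAu‖² + ρ uᵀNu`, which vanishes only at `v = 0`. So `0 < P < I`, the
eigenvalues of the symmetric matrix `I - 2P` lie in `(-1, 1)`, and its spectral norm is the
largest of their absolute values. -/

namespace spectrum

variable {R A : Type*} [CommRing R] [Ring A] [Algebra R A] {a : A} {r : R}

theorem one_sub_mem_one_sub (h : r ∈ spectrum R a) : 1 - r ∈ spectrum R (1 - a) := by
  rw [← map_one (algebraMap R A), ← singleton_sub_eq]
  exact Set.sub_mem_sub rfl h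

theorem one_add_mem_one_add (h : r ∈ spectrum R a) : 1 + r ∈ spectrum R (1 + a) := by
  rw [← map_one (algebraMap R A), ← singleton_add_eq]
  exact Set.add_mem_add rfl h

end spectrum

namespace Matrix

theorem vecMul_injective_of_rank_eq_card {m n K : Type*} [Fintype m] [Fintype n] [Field K]
    {A : Matrix m n K} (hA : A.rank = Fintype.card m) : Function.Injective A.vecMul := by
  rw [vecMul_injective_iff, linearIndependent_iff_card_eq_finrank_span, ← hA]
  exact rank_eq_finrank_span_row A

variable {m n : Type*} [Fintype m] [Fintype n]

theorem posSemidef_transpose_mul_self (A : Matrix m n ℝ) : (Aᵀ * A).PosSemidef := by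
  simpa only [conjTranspose_eq_transpose_of_trivial] using posSemidef_conjTranspose_mul_self A

theorem PosDef.add_smul_transpose_mul_self {N : Matrix n n ℝ} (hN : N.PosDef)
    (A : Matrix m n ℝ) {ρ : ℝ} (hρ : 0 ≤ ρ) : (N + ρ • (Aᵀ * A)).PosDef :=
  hN.add_posSemidef ((posSemidef_transpose_mul_self A).smul hρ)

variable [DecidableEq n]

theorem PosDef.pos_of_mem_spectrum {𝕜 : Type*} [RCLike 𝕜] {A : Matrix n n 𝕜} (hA : A.PosDef)
    {σ : ℝ} (hσ : σ ∈ spectrum ℝ A) : 0 < σ := by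
  rw [hA.1.spectrum_real_eq_range_eigenvalues] at hσ
  obtain ⟨i, rfl⟩ := hσ
  exact hA.eigenvalues_pos i

theorem IsHermitian.l2_opNorm_eq_norm_eigenvalues {A : Matrix n n ℝ} (hA : A.IsHermitian) :
    ‖A‖ = ‖hA.eigenvalues‖ := by
  conv_lhs => rw [hA.spectral_theorem, Unitary.conjStarAlgAut_apply]
  rw [← Unitary.coe_star, CStarRing.norm_mul_coe_unitary, CStarRing.norm_coe_unitary_mul,
    l2_opNorm_diagonal]
  rfl

theorem l2_opNorm_lt_one_of_posDef {H : Matrix n n ℝ} (h₁ : (1 - H).PosDef)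
    (h₂ : (1 + H).PosDef) : ‖H‖ < 1 := by
  have hH : H.IsHermitian := by simpa using h₂.1.sub isHermitian_one
  rw [hH.l2_opNorm_eq_norm_eigenvalues, pi_norm_lt_iff one_pos]
  intro i
  have he := hH.eigenvalues_mem_spectrum_real i
  have h_sub := h₁.pos_of_mem_spectrum (spectrum.one_sub_mem_one_sub he)
  have h_add := h₂.pos_of_mem_spectrum (spectrum.one_add_mem_one_add he)
  rw [Real.norm_eq_abs, abs_lt]
  constructor <;> linarith

theorem posDef_one_sub_smul_mul_inv_mul_transpose [DecidableEq m] {N : Matrix n n ℝ}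
    (hN : N.PosDef) (A : Matrix m n ℝ) {ρ : ℝ} (hρ : 0 ≤ ρ) :
    (1 - ρ • (A * (N + ρ • (Aᵀ * A))⁻¹ * Aᵀ)).PosDef := by
  set M := N + ρ • (Aᵀ * A)
  have hM : M.PosDef := hN.add_smul_transpose_mul_self A hρ
  have hQ : (A * M⁻¹ * Aᵀ).PosSemidef := by
    simpa using hM.inv.posSemidef.mul_mul_conjTranspose_same A
  refine .of_dotProduct_mulVec_pos (isHermitian_one.sub (hQ.smul hρ).1) fun v hv => ?_
  set u := M⁻¹ *ᵥ (Aᵀ *ᵥ v)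
  set a := A *ᵥ u
  have hMu : M *ᵥ u = Aᵀ *ᵥ v := by
    rw [mulVec_mulVec, mul_nonsing_inv _ (isUnit_iff_isUnit_det M |>.mp hM.isUnit), one_mulVec]
  have htranspose (w : n → ℝ) (x : m → ℝ) : w ⬝ᵥ Aᵀ *ᵥ x = A *ᵥ w ⬝ᵥ x := by
    rw [dotProduct_mulVec, vecMul_transpose]
  have hform : a ⬝ᵥ v = u ⬝ᵥ N *ᵥ u + ρ * (a ⬝ᵥ a) := by
    rw [← htranspose, ← hMu, add_mulVec, dotProduct_add, smul_mulVec, dotProduct_smul,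
      ← mulVec_mulVec, htranspose, smul_eq_mul]
  have hsq : star v ⬝ᵥ (1 - ρ • (A * M⁻¹ * Aᵀ)) *ᵥ v
      = (v - ρ • a) ⬝ᵥ (v - ρ • a) + ρ * (u ⬝ᵥ N *ᵥ u) := by
    have hQv : (A * M⁻¹ * Aᵀ) *ᵥ v = a := by simp only [a, u, mulVec_mulVec]
    simp only [star_trivial, sub_mulVec, one_mulVec, smul_mulVec, hQv, dotProduct_sub,
      sub_dotProduct, dotProduct_smul, smul_dotProduct, smul_eq_mul, dotProduct_comm v a]
    linear_combination ρ * hform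
  rw [hsq]
  by_cases hρa : ρ • a = 0
  · have hvv : 0 < v ⬝ᵥ v := by simpa using dotProduct_star_self_pos_iff.mpr hv
    have hNu : 0 ≤ u ⬝ᵥ N *ᵥ u := by simpa using hN.posSemidef.dotProduct_mulVec_nonneg u
    rw [hρa, sub_zero]
    exact add_pos_of_pos_of_nonneg hvv (mul_nonneg hρ hNu)
  · obtain ⟨hρ0, ha0⟩ := smul_ne_zero_iff.mp hρa
    have hu : u ≠ 0 := fun hu => ha0 (by simp [a, hu])
    have hNu : 0 < u ⬝ᵥ N *ᵥ u := by simpa using hN.dotProduct_mulVec_pos hu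
    have hww : 0 ≤ (v - ρ • a) ⬝ᵥ (v - ρ • a) := by
      simpa using dotProduct_star_self_nonneg (v - ρ • a)
    exact add_pos_of_nonneg_of_pos hww (mul_pos (hρ.lt_of_ne' hρ0) hNu)

end Matrix

/-- For full row-rank `A`, `λ, ρ > 0`, the matrix
`P = ρ A (JᵀJ + λI + ρAᵀA)⁻¹ Aᵀ` is symmetric positive definite with all
eigenvalues in `(0,1)`, and consequently `‖I − 2P‖ < 1`. -/
theorem P_posDef_and_contraction {m n r : ℕ} (J : Matrix (Fin m) (Fin n) ℝ)
    (A : Matrix (Fin r) (Fin n) ℝ) (hA : A.rank = r) (l ρ : ℝ)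
    (hl : 0 < l) (hρ : 0 < ρ)
    (P : Matrix (Fin r) (Fin r) ℝ)
    (hP : P = ρ • (A * (Jᵀ * J + l • (1 : Matrix (Fin n) (Fin n) ℝ) + ρ • (Aᵀ * A))⁻¹ * Aᵀ)) :
    P.PosDef ∧ (∀ σ ∈ spectrum ℝ P, σ ∈ Set.Ioo (0 : ℝ) 1) ∧
      ‖(1 : Matrix (Fin r) (Fin r) ℝ) - 2 • P‖ < 1 := by
  have hN : (Jᵀ * J + l • (1 : Matrix (Fin n) (Fin n) ℝ)).PosDef :=
    PosDef.posSemidef_add (posSemidef_transpose_mul_self J) (PosDef.one.smul hl)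
  have hA_inj : Function.Injective A.vecMul :=
    vecMul_injective_of_rank_eq_card (by rwa [Fintype.card_fin])
  have hP_pos : P.PosDef := by
    rw [hP]
    simpa using ((hN.add_smul_transpose_mul_self A hρ.le).inv.mul_mul_conjTranspose_same
      hA_inj).smul hρ
  have hP_lt_one : (1 - P).PosDef := hP ▸ posDef_one_sub_smul_mul_inv_mul_transpose hN A hρ.le
  refine ⟨hP_pos, fun σ hσ => ⟨hP_pos.pos_of_mem_spectrum hσ, ?_⟩, ?_⟩
  · exact sub_pos.mp (hP_lt_one.pos_of_mem_spectrum (spectrum.one_sub_mem_one_sub hσ))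
  · refine l2_opNorm_lt_one_of_posDef ?_ ?_
    · simpa [two_smul] using hP_pos.add hP_pos
    · convert hP_lt_one.add hP_lt_one using 1
      rw [two_smul]
      abel
end

section
/- For a symmetric positive definite matrix S with minimum eigenvalue σ_min and maximum eigenvalue σ_max, the choice ρ* = 1/√(σ_min σ_max) minimizes over ρ > 0 the quantity max{|1 − 2·ρσ_min/(1+ρσ_min)|, |1 − 2·ρσ_max/(1+ρσ_max)|}. -/
/-!
The factor is built from `cayley μ = 1 - 2μ/(1+μ) = (1 - μ)/(1 + μ)`. For `μ > 0`, `|cayley|`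
decreases on `(0, 1]`, increases on `[1, ∞)`, and `|cayley μ⁻¹| = |cayley μ|`. Since
`ρ* σmin · ρ* σmax = 1`, the two terms of the factor agree at `ρ*`, where
`ρ* σmin ≤ 1 ≤ ρ* σmax`: decreasing `ρ` can only increase the first term, and increasing `ρ`
only the second.
-/

open Matrix Set

noncomputable def cayley (μ : ℝ) : ℝ := 1 - 2 * (μ / (1 + μ))

theorem cayley_eq_div {μ : ℝ} (hμ : 0 ≤ μ) : cayley μ = (1 - μ) / (1 + μ) := by
  rw [cayley]
  field_simp
  ring

theorem cayley_inv {μ : ℝ} (hμ : 0 < μ) : cayley μ⁻¹ = -cayley μ := by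
  rw [cayley_eq_div hμ.le, cayley_eq_div (inv_nonneg.2 hμ.le)]
  field_simp
  ring

theorem cayley_antitoneOn : AntitoneOn cayley (Ici 0) := by
  intro μ hμ ν hν hμν
  rw [mem_Ici] at hμ hν
  rw [cayley_eq_div hμ, cayley_eq_div hν, div_le_div_iff₀ (by linarith) (by linarith)]
  nlinarith

theorem abs_cayley_antitoneOn : AntitoneOn (fun μ => |cayley μ|) (Icc 0 1) := by
  intro μ hμ ν hν hμν
  have hnonneg : 0 ≤ cayley ν := by
    rw [cayley_eq_div hν.1]
    exact div_nonneg (by linarith [hν.2]) (by linarith [hν.1])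
  have hle := cayley_antitoneOn hμ.1 hν.1 hμν
  simp only [abs_of_nonneg hnonneg, abs_of_nonneg (hnonneg.trans hle), hle]

theorem abs_cayley_monotoneOn : MonotoneOn (fun μ => |cayley μ|) (Ici 1) := by
  intro μ hμ ν hν hμν
  rw [mem_Ici] at hμ hν
  have hnonpos : cayley μ ≤ 0 := by
    rw [cayley_eq_div (by linarith)]
    exact div_nonpos_of_nonpos_of_nonneg (by linarith) (by linarith)
  have hle := cayley_antitoneOn (mem_Ici.2 (by linarith)) (mem_Ici.2 (by linarith)) hμν
  simp only [abs_of_nonpos hnonpos, abs_of_nonpos (hle.trans hnonpos), neg_le_neg_iff, hle]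

theorem max_abs_cayley_mul_le_of_sq_mul_eq_one {a b ρ₀ : ℝ} (ha : 0 < a) (hab : a ≤ b)
    (hρ₀ : 0 < ρ₀) (hρ₀ab : ρ₀ ^ 2 * (a * b) = 1) {ρ : ℝ} (hρ : 0 < ρ) :
    max |cayley (ρ₀ * a)| |cayley (ρ₀ * b)| ≤ max |cayley (ρ * a)| |cayley (ρ * b)| := by
  have hb : 0 < b := ha.trans_le hab
  have hmul : ρ₀ * b * (ρ₀ * a) = 1 := by linear_combination hρ₀ab
  have hpq : ρ₀ * a ≤ ρ₀ * b := by gcongr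
  have hp1 : ρ₀ * a ≤ 1 := by nlinarith
  have hq1 : 1 ≤ ρ₀ * b := by
    nlinarith [mul_nonneg (sub_nonneg.2 hp1) (by positivity : 0 ≤ ρ₀ * b)]
  have hq : ρ₀ * b = (ρ₀ * a)⁻¹ := eq_inv_of_mul_eq_one_left hmul
  have habs : |cayley (ρ₀ * b)| = |cayley (ρ₀ * a)| := by
    rw [hq, cayley_inv (by positivity), abs_neg]
  rcases le_total ρ ρ₀ with hle | hle
  · rw [habs, max_self]
    have hρa : ρ * a ≤ ρ₀ * a := by gcongr
    exact le_max_of_le_left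
      (abs_cayley_antitoneOn ⟨by positivity, hρa.trans hp1⟩ ⟨by positivity, hp1⟩ hρa)
  · rw [← habs, max_self]
    exact le_max_of_le_right (abs_cayley_monotoneOn hq1 (hq1.trans (by gcongr)) (by gcongr))

/-- For a symmetric positive definite `S` with extreme eigenvalues
`σmin, σmax`, the choice `ρ* = 1/√(σmin σmax)` minimizes over `ρ > 0` the
convergence factor `max{|1 − 2ρσmin/(1+ρσmin)|, |1 − 2ρσmax/(1+ρσmax)|}`. -/
theorem optimal_penalty_parameter {r : ℕ} (S : Matrix (Fin r) (Fin r) ℝ)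
    (hS : S.PosDef) (σmin σmax : ℝ)
    (hmin : IsLeast (spectrum ℝ S) σmin) (hmax : IsGreatest (spectrum ℝ S) σmax) :
    ∀ F : ℝ → ℝ,
    (F = fun ρ => max |1 - 2 * (ρ * σmin / (1 + ρ * σmin))|
                     |1 - 2 * (ρ * σmax / (1 + ρ * σmax))|) →
    ∀ ρstar : ℝ, ρstar = 1 / Real.sqrt (σmin * σmax) →
    ∀ ρ : ℝ, 0 < ρ → F ρstar ≤ F ρ := by
  rintro F rfl ρstar rfl ρ hρ
  have hpos : 0 < σmin := by
    obtain ⟨i, hi⟩ := hS.isHermitian.spectrum_real_eq_range_eigenvalues ▸ hmin.1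
    exact hi ▸ hS.eigenvalues_pos i
  have hle : σmin ≤ σmax := hmax.2 hmin.1
  have hprod : 0 < σmin * σmax := mul_pos hpos (hpos.trans_le hle)
  refine max_abs_cayley_mul_le_of_sq_mul_eq_one hpos hle (by positivity) ?_ hρ
  rw [one_div, inv_pow, Real.sq_sqrt hprod.le, inv_mul_cancel₀ hprod.ne']
end
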